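/- The prechart SExp of 1-free star expressions is locally finite: for every expression e, the smallest subcoalgebra ⟨e⟩ containing e is finite. Moreover, the number of states of ⟨e⟩ is at most N(e), where N(0) = N(a) = 1, N(e₁+e₂) = N(e₁*e₂) = N(e₁)+N(e₂), and N(e₁e₂) = N(e₁) + N(e₁)·N(e₂). -/

import Mathlib

/-- 1-free star expressions over alphabet `A`. -/
inductive SExp (A : Type) : Type
  | act : A → SExp A
  | zero : SExp A
  | add : SExp A → SExp A → SExp A
  | seq : SExp A → SExp A → SExp A
  | star : SExp A → SExp A → SExp A

/-- The output relation `e ⇒ a` of the operational semantics. -/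
inductive SOut {A : Type} : SExp A → A → Prop
  | act (a : A) : SOut (.act a) a
  | addL {e₁ e₂ : SExp A} {a : A} : SOut e₁ a → SOut (.add e₁ e₂) a
  | addR {e₁ e₂ : SExp A} {a : A} : SOut e₂ a → SOut (.add e₁ e₂) a
  | star {e₁ e₂ : SExp A} {a : A} : SOut e₂ a → SOut (.star e₁ e₂) a

/-- The transition relation `e →a f` of the operational semantics. -/
inductive STr {A : Type} : SExp A → A → SExp A → Prop
  | addL {e₁ e₂ f : SExp A} {a : A} : STr e₁ a f → STr (.add e₁ e₂) a f
  | addR {e₁ e₂ f : SExp A} {a : A} : STr e₂ a f → STr (.add e₁ e₂) a f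
  | seqO {e₁ e₂ : SExp A} {a : A} : SOut e₁ a → STr (.seq e₁ e₂) a e₂
  | seqT {e₁ e₂ f : SExp A} {a : A} : STr e₁ a f → STr (.seq e₁ e₂) a (.seq f e₂)
  | starR {e₁ e₂ f : SExp A} {a : A} : STr e₂ a f → STr (.star e₁ e₂) a f
  | starL {e₁ e₂ f : SExp A} {a : A} : STr e₁ a f → STr (.star e₁ e₂) a (.seq f (.star e₁ e₂))
  | starO {e₁ e₂ : SExp A} {a : A} : SOut e₁ a → STr (.star e₁ e₂) a (.star e₁ e₂)

/-- Provable equivalence: the smallest congruence containing Milner's 1-free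
axioms (B1)-(B7), (BKS1), (BKS2) and closed under the rule (RSP). -/
inductive Eqv {A : Type} : SExp A → SExp A → Prop
  | refl (e : SExp A) : Eqv e e
  | symm {e f : SExp A} : Eqv e f → Eqv f e
  | trans {e f g : SExp A} : Eqv e f → Eqv f g → Eqv e g
  | addCongr {e₁ f₁ e₂ f₂ : SExp A} : Eqv e₁ f₁ → Eqv e₂ f₂ → Eqv (.add e₁ e₂) (.add f₁ f₂)
  | seqCongr {e₁ f₁ e₂ f₂ : SExp A} : Eqv e₁ f₁ → Eqv e₂ f₂ → Eqv (.seq e₁ e₂) (.seq f₁ f₂)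
  | starCongr {e₁ f₁ e₂ f₂ : SExp A} : Eqv e₁ f₁ → Eqv e₂ f₂ → Eqv (.star e₁ e₂) (.star f₁ f₂)
  | B1 (e₁ e₂ : SExp A) : Eqv (.add e₁ e₂) (.add e₂ e₁)
  | B2 (e₁ e₂ e₃ : SExp A) : Eqv (.add e₁ (.add e₂ e₃)) (.add (.add e₁ e₂) e₃)
  | B3 (e₁ : SExp A) : Eqv (.add e₁ e₁) e₁
  | B4 (e₁ e₂ e₃ : SExp A) : Eqv (.seq (.add e₁ e₂) e₃) (.add (.seq e₁ e₃) (.seq e₂ e₃))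
  | B5 (e₁ e₂ e₃ : SExp A) : Eqv (.seq e₁ (.seq e₂ e₃)) (.seq (.seq e₁ e₂) e₃)
  | B6 (e₁ : SExp A) : Eqv (.add e₁ .zero) e₁
  | B7 (e₁ : SExp A) : Eqv (.seq .zero e₁) .zero
  | BKS1 (e₁ e₂ : SExp A) : Eqv (.star e₁ e₂) (.add (.seq e₁ (.star e₁ e₂)) e₂)
  | BKS2 (e₁ e₂ e₃ : SExp A) : Eqv (.seq (.star e₁ e₂) e₃) (.star e₁ (.seq e₂ e₃))
  | RSP {e₁ e₂ e₃ : SExp A} : Eqv e₃ (.add (.seq e₁ e₃) e₂) → Eqv e₃ (.star e₁ e₂)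

/-- Generalized sum of a list of expressions (the empty sum is `0`). -/
def sumList {A : Type} (l : List (SExp A)) : SExp A := l.foldr SExp.add SExp.zero

/-- Size bound `N(e)` on the chart interpretation of `e`. -/
def Nsize {A : Type} : SExp A → ℕ
  | .act _ => 1
  | .zero => 1
  | .add e₁ e₂ => Nsize e₁ + Nsize e₂
  | .seq e₁ e₂ => Nsize e₁ + Nsize e₁ * Nsize e₂
  | .star e₁ e₂ => Nsize e₁ + Nsize e₂

/-- `⟨e⟩`: the smallest set containing `e` and closed under transitions. -/
def Reach {A : Type} (e : SExp A) : Set (SExp A) :=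
  {f | Relation.ReflTransGen (fun u v => ∃ a, STr u a v) e f}

/-!
Every expression reachable from `e` is either `e` itself or one of an explicit list of
derivatives of `e`, computed by structural recursion: the derivatives of `e₁ e₂` are the
`f e₂` for derivatives `f` of `e₁`, together with `e₂` and its derivatives, and similarly for
`e₁ * e₂` with `e₁ * e₂` in place of `e₂`. This list is closed under transitions and has
fewer than `N(e)` entries.
-/

theorem List.ncard_setOf_mem_le_length {α : Type*} (l : List α) :
    {x | x ∈ l}.ncard ≤ l.length := by
  classical
  calc {x | x ∈ l}.ncard = l.toFinset.card := by
        rw [← Set.ncard_coe_finset, List.coe_toFinset]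
    _ ≤ l.length := l.toFinset_card_le

theorem STr.seq_cases {A : Type} {e₁ e₂ g : SExp A} {a : A} (h : STr (.seq e₁ e₂) a g) :
    (∃ f, STr e₁ a f ∧ g = .seq f e₂) ∨ g = e₂ := by
  cases h with
  | seqO => exact .inr rfl
  | seqT h => exact .inl ⟨_, h, rfl⟩

theorem STr.star_cases {A : Type} {e₁ e₂ g : SExp A} {a : A} (h : STr (.star e₁ e₂) a g) :
    (∃ f, STr e₁ a f ∧ g = .seq f (.star e₁ e₂)) ∨ g = .star e₁ e₂ ∨ STr e₂ a g := by
  cases h with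
  | starR h => exact .inr (.inr h)
  | starL h => exact .inl ⟨_, h, rfl⟩
  | starO => exact .inr (.inl rfl)

namespace SExp

variable {A : Type}

def derivs : SExp A → List (SExp A)
  | .act _ => []
  | .zero => []
  | .add e₁ e₂ => derivs e₁ ++ derivs e₂
  | .seq e₁ e₂ => (derivs e₁).map (fun f => .seq f e₂) ++ e₂ :: derivs e₂
  | .star e₁ e₂ => (derivs e₁).map (fun f => .seq f (.star e₁ e₂)) ++ .star e₁ e₂ :: derivs e₂

theorem one_le_Nsize (e : SExp A) : 1 ≤ Nsize e := by
  induction e <;> simp only [Nsize] <;> omega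

theorem length_derivs_lt_Nsize (e : SExp A) : (derivs e).length < Nsize e := by
  induction e with
  | act | zero => simp [derivs, Nsize]
  | add | star => simp only [derivs, Nsize, List.length_append, List.length_map,
      List.length_cons]; omega
  | seq e₁ e₂ ih₁ ih₂ =>
    have : Nsize e₂ ≤ Nsize e₁ * Nsize e₂ := Nat.le_mul_of_pos_left _ (one_le_Nsize e₁)
    simp only [derivs, Nsize, List.length_append, List.length_map, List.length_cons]
    omega

theorem mem_derivs_of_STr {e f : SExp A} {a : A} (h : STr e a f) : f ∈ derivs e := by
  induction h <;> simp_all [derivs]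

theorem mem_derivs_of_STr_of_mem {e f g : SExp A} {a : A} (hf : f ∈ derivs e)
    (h : STr f a g) : g ∈ derivs e := by
  induction e generalizing f g with
  | act | zero => simp [derivs] at hf
  | add e₁ e₂ ih₁ ih₂ =>
    simp only [derivs, List.mem_append] at hf ⊢
    exact hf.imp (ih₁ · h) (ih₂ · h)
  | seq e₁ e₂ ih₁ ih₂ =>
    simp only [derivs, List.mem_append, List.mem_map, List.mem_cons] at hf ⊢
    obtain ⟨u, hu, rfl⟩ | rfl | hf := hf
    · obtain ⟨v, hv, rfl⟩ | rfl := h.seq_cases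
      · exact .inl ⟨v, ih₁ hu hv, rfl⟩
      · exact .inr (.inl rfl)
    · exact .inr (.inr (mem_derivs_of_STr h))
    · exact .inr (.inr (ih₂ hf h))
  | star e₁ e₂ ih₁ ih₂ =>
    simp only [derivs, List.mem_append, List.mem_map, List.mem_cons] at hf ⊢
    obtain ⟨u, hu, rfl⟩ | rfl | hf := hf
    · obtain ⟨v, hv, rfl⟩ | rfl := h.seq_cases
      · exact .inl ⟨v, ih₁ hu hv, rfl⟩
      · exact .inr (.inl rfl)
    · obtain ⟨v, hv, rfl⟩ | rfl | h := h.star_cases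
      · exact .inl ⟨v, mem_derivs_of_STr hv, rfl⟩
      · exact .inr (.inl rfl)
      · exact .inr (.inr (mem_derivs_of_STr h))
    · exact .inr (.inr (ih₂ hf h))

theorem Reach_subset_derivs (e : SExp A) : Reach e ⊆ {f | f ∈ e :: derivs e} := by
  intro g hg
  induction hg with
  | refl => exact List.mem_cons_self
  | tail _ hstep ih =>
    obtain ⟨a, h⟩ := hstep
    obtain rfl | hf := List.mem_cons.mp ih
    · exact List.mem_cons_of_mem _ (mem_derivs_of_STr h)
    · exact List.mem_cons_of_mem _ (mem_derivs_of_STr_of_mem hf h)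

end SExp

/-- The prechart of 1-free star expressions is locally finite: the generated
subcoalgebra `⟨e⟩` is finite, with at most `N(e)` states. -/
theorem stmt8 {A : Type} (e : SExp A) :
    (Reach e).Finite ∧ (Reach e).ncard ≤ Nsize e := by
  have hsub := SExp.Reach_subset_derivs e
  have hfin := (e :: e.derivs).finite_toSet
  refine ⟨hfin.subset hsub, ?_⟩
  calc (Reach e).ncard ≤ {f | f ∈ e :: e.derivs}.ncard := Set.ncard_le_ncard hsub hfin
    _ ≤ (e :: e.derivs).length := List.ncard_setOf_mem_le_length _
    _ ≤ Nsize e := e.length_derivs_lt_Nsize
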